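/- The collinearity of three locations can be detected by light signals: three vertical lines a1, a2, a3 in F^4 have collinear spatial projections if and only if there exist light signals σ1, σ2, σ3 and events e1 on a1, e2 on a2, e3 on a3 such that (after a suitable permutation i,j,k of 1,2,3) σ1 goes from e_i to e_j, σ2 from e_j to e_k, and σ3 from e_i to e_k. -/

import Mathlib

/-- Squared Euclidean norm on `F^3`. -/
def nsq {F : Type*} [Field F] [LinearOrder F] [IsStrictOrderedRing F] (v : Fin 3 → F) : F :=
  v 0 ^ 2 + v 1 ^ 2 + v 2 ^ 2

/-- Standard inner product on `F^3`. -/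
def dot3 {F : Type*} [Field F] [LinearOrder F] [IsStrictOrderedRing F] (u v : Fin 3 → F) : F :=
  u 0 * v 0 + u 1 * v 1 + u 2 * v 2

/-- A Euclidean field: an ordered field in which every positive element has a square root. -/
def IsEuclidean (F : Type*) [Field F] [LinearOrder F] [IsStrictOrderedRing F] : Prop :=
  ∀ x : F, 0 < x → ∃ y : F, y ^ 2 = x

/-- A line in `F^4 = F × F^3`. -/
def IsLine {F : Type*} [Field F] [LinearOrder F] [IsStrictOrderedRing F] (L : Set (F × (Fin 3 → F))) : Prop :=
  ∃ p d : F × (Fin 3 → F), d ≠ 0 ∧ L = {x | ∃ s : F, x = p + s • d}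

/-- A particle: a line in `F^4` of slope less than 1 (spatial speed below light speed). -/
def IsParticle {F : Type*} [Field F] [LinearOrder F] [IsStrictOrderedRing F] (L : Set (F × (Fin 3 → F))) : Prop :=
  ∃ p d : F × (Fin 3 → F), d.1 ≠ 0 ∧ nsq d.2 < d.1 ^ 2 ∧
    L = {x | ∃ s : F, x = p + s • d}

/-- Forward light signal from `p` to `q` (degenerate case `p = q` allowed):
the time increases and the spatial distance equals the elapsed time. -/
def Sig {F : Type*} [Field F] [LinearOrder F] [IsStrictOrderedRing F] (p q : F × (Fin 3 → F)) : Prop :=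
  p.1 ≤ q.1 ∧ nsq (q.2 - p.2) = (q.1 - p.1) ^ 2

/-- A vertical line: a line parallel to the time axis. -/
def IsVertical {F : Type*} [Field F] [LinearOrder F] [IsStrictOrderedRing F] (L : Set (F × (Fin 3 → F))) : Prop :=
  ∃ v0 : Fin 3 → F, L = {x | x.2 = v0}

/-- Two subsets of `F^4` are parallel when one is a translate of the other. -/
def LinesParallel {F : Type*} [Field F] [LinearOrder F] [IsStrictOrderedRing F]
    (L L' : Set (F × (Fin 3 → F))) : Prop :=
  ∃ w : F × (Fin 3 → F), L' = (fun x => x + w) '' L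

/-!
If the locations lie on the line `s ↦ s • d + a`, write `v_i = c_i • d + a`: the events
`(c_i |d|, v_i)` lie on one light-like line, so after sorting the `c_i` every earlier event signals
every later one. Conversely, signals `e_i → e_j → e_k` and `e_i → e_k` give spatial displacements
`u`, `v` with `|u + v| = |u| + |v|`, hence `u ⬝ v = |u| |v|`, and Lagrange's identity
`|u ⨯ v|² = |u|²|v|² - (u ⬝ v)²` forces `u ⨯ v = 0`.
-/

open Matrix

lemma IsEuclidean.exists_nonneg_sq_eq {F : Type*} [Field F] [LinearOrder F] [IsStrictOrderedRing F]
    (hF : IsEuclidean F) {x : F} (hx : 0 ≤ x) : ∃ m : F, 0 ≤ m ∧ m ^ 2 = x := by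
  rcases hx.eq_or_lt with rfl | hx
  · exact ⟨0, le_rfl, zero_pow two_ne_zero⟩
  · obtain ⟨y, hy⟩ := hF x hx
    exact ⟨|y|, abs_nonneg y, by rw [sq_abs, hy]⟩

lemma collinear_triple_comp_perm_iff {k V P : Type*} [DivisionRing k] [AddCommGroup V] [Module k V]
    [AddTorsor V P] (p : Fin 3 → P) (σ : Equiv.Perm (Fin 3)) :
    Collinear k {p (σ 0), p (σ 1), p (σ 2)} ↔ Collinear k {p 0, p 1, p 2} := by
  rw [collinear_iff_not_affineIndependent_of_ne (σ.injective.ne (by decide))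
      (σ.injective.ne (by decide)) (σ.injective.ne (by decide)),
    collinear_iff_not_affineIndependent_of_ne (by decide : (0 : Fin 3) ≠ 1) (by decide)
      (by decide)]

lemma collinear_of_crossProduct_sub_eq_zero {F : Type*} [Field F] {a b c : Fin 3 → F}
    (h : (b - a) ⨯₃ (c - b) = 0) : Collinear F {a, b, c} := by
  by_cases hab : b - a = 0
  · rw [sub_eq_zero.1 hab, Set.insert_eq_of_mem (Set.mem_insert _ _)]
    exact collinear_pair F a c
  obtain ⟨r, hr⟩ : ∃ r : F, r • (b - a) = c - b := by
    by_contra! hr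
    exact (crossProduct_ne_zero_iff_linearIndependent.2
      ((LinearIndependent.pair_iff' hab).2 hr)) h
  rw [collinear_iff_of_mem (Set.mem_insert a _)]
  refine ⟨b - a, ?_⟩
  simp only [Set.mem_insert_iff, Set.mem_singleton_iff, forall_eq_or_imp, forall_eq, vadd_eq_add]
  exact ⟨⟨0, by simp⟩, ⟨1, by simp⟩, ⟨1 + r, by rw [add_smul, one_smul, hr]; abel⟩⟩

lemma crossProduct_eq_zero_of_dotProduct_self_add {R : Type*} [CommRing R] [LinearOrder R]
    [IsStrictOrderedRing R] {u v : Fin 3 → R} {a b : R} (hu : u ⬝ᵥ u = a ^ 2)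
    (hv : v ⬝ᵥ v = b ^ 2) (huv : (u + v) ⬝ᵥ (u + v) = (a + b) ^ 2) : u ⨯₃ v = 0 := by
  have hdot : u ⬝ᵥ v = a * b := by
    simp only [add_dotProduct, dotProduct_add, hu, hv, dotProduct_comm v u] at huv
    linarith
  rw [← dotProduct_self_eq_zero, cross_dot_cross, hu, hv, hdot, dotProduct_comm v u, hdot]
  ring

section Signals

variable {F : Type*} [Field F] [LinearOrder F] [IsStrictOrderedRing F]

lemma nsq_eq_dotProduct (v : Fin 3 → F) : nsq v = v ⬝ᵥ v := by
  simp only [nsq, dotProduct, Fin.sum_univ_three, sq]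

lemma nsq_nonneg (v : Fin 3 → F) : 0 ≤ nsq v := by
  unfold nsq; positivity

lemma sig_of_le {d w : Fin 3 → F} {m c₀ c₁ : F} (hm : 0 ≤ m) (hmd : m ^ 2 = nsq d)
    (hc : c₀ ≤ c₁) : Sig (c₀ * m, c₀ • d + w) (c₁ * m, c₁ • d + w) := by
  refine ⟨mul_le_mul_of_nonneg_right hc hm, ?_⟩
  rw [show c₁ • d + w - (c₀ • d + w) = (c₁ - c₀) • d by module]
  simp only [nsq, Pi.smul_apply, smul_eq_mul] at hmd ⊢
  linear_combination (c₁ - c₀) ^ 2 * hmd.symm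

lemma crossProduct_eq_zero_of_sig {e₀ e₁ e₂ : F × (Fin 3 → F)} (h₀₁ : Sig e₀ e₁) (h₁₂ : Sig e₁ e₂)
    (h₀₂ : Sig e₀ e₂) : (e₁.2 - e₀.2) ⨯₃ (e₂.2 - e₁.2) = 0 := by
  refine crossProduct_eq_zero_of_dotProduct_self_add (a := e₁.1 - e₀.1) (b := e₂.1 - e₁.1)
    ?_ ?_ ?_ <;> rw [← nsq_eq_dotProduct]
  · exact h₀₁.2
  · exact h₁₂.2
  · rw [sub_add_sub_cancel', h₀₂.2]
    ring

end Signals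

theorem stmt8_general {F : Type*} [Field F] [LinearOrder F] [IsStrictOrderedRing F] (hEu : IsEuclidean F)
    (v1 v2 v3 : Fin 3 → F) :
    Collinear F ({v1, v2, v3} : Set (Fin 3 → F)) ↔
      ∃ σ : Equiv.Perm (Fin 3), ∃ t : Fin 3 → F,
        Sig ((t (σ 0), ![v1, v2, v3] (σ 0)) : F × (Fin 3 → F))
            ((t (σ 1), ![v1, v2, v3] (σ 1)) : F × (Fin 3 → F)) ∧
        Sig ((t (σ 1), ![v1, v2, v3] (σ 1)) : F × (Fin 3 → F))
            ((t (σ 2), ![v1, v2, v3] (σ 2)) : F × (Fin 3 → F)) ∧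
        Sig ((t (σ 0), ![v1, v2, v3] (σ 0)) : F × (Fin 3 → F))
            ((t (σ 2), ![v1, v2, v3] (σ 2)) : F × (Fin 3 → F)) := by
  constructor
  · intro hcol
    obtain ⟨d, hd⟩ := (collinear_iff_of_mem (Set.mem_insert v1 _)).1 hcol
    choose c hc using fun i : Fin 3 => hd (![v1, v2, v3] i) (by fin_cases i <;> simp)
    obtain ⟨m, hm, hmd⟩ := hEu.exists_nonneg_sq_eq (nsq_nonneg d)
    have hsig : ∀ i j, c i ≤ c j →
        Sig (c i * m, ![v1, v2, v3] i) (c j * m, ![v1, v2, v3] j) := fun i j hij => by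
      rw [hc i, hc j]
      exact sig_of_le hm hmd hij
    have hsorted := Tuple.monotone_sort c
    exact ⟨Tuple.sort c, fun i => c i * m, hsig _ _ (hsorted (by decide)),
      hsig _ _ (hsorted (by decide)), hsig _ _ (hsorted (by decide))⟩
  · rintro ⟨σ, t, h₀₁, h₁₂, h₀₂⟩
    exact (collinear_triple_comp_perm_iff ![v1, v2, v3] σ).1
      (collinear_of_crossProduct_sub_eq_zero (crossProduct_eq_zero_of_sig h₀₁ h₁₂ h₀₂))

/-- three distinct locations (vertical lines at spatial positions
`v1, v2, v3`) are collinear in `F^3` iff, after a suitable permutation, there are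
events on them connected by forward light signals `e_i → e_j`, `e_j → e_k`, `e_i → e_k`. -/
theorem stmt8 {F : Type*} [Field F] [LinearOrder F] [IsStrictOrderedRing F] (hEu : IsEuclidean F)
    (v1 v2 v3 : Fin 3 → F) (h12 : v1 ≠ v2) (h13 : v1 ≠ v3) (h23 : v2 ≠ v3) :
    Collinear F ({v1, v2, v3} : Set (Fin 3 → F)) ↔
      ∃ σ : Equiv.Perm (Fin 3), ∃ t : Fin 3 → F,
        Sig ((t (σ 0), ![v1, v2, v3] (σ 0)) : F × (Fin 3 → F))
            ((t (σ 1), ![v1, v2, v3] (σ 1)) : F × (Fin 3 → F)) ∧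
        Sig ((t (σ 1), ![v1, v2, v3] (σ 1)) : F × (Fin 3 → F))
            ((t (σ 2), ![v1, v2, v3] (σ 2)) : F × (Fin 3 → F)) ∧
        Sig ((t (σ 0), ![v1, v2, v3] (σ 0)) : F × (Fin 3 → F))
            ((t (σ 2), ![v1, v2, v3] (σ 2)) : F × (Fin 3 → F)) :=
  stmt8_general hEu v1 v2 v3
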